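/- Let n ≥ 2 be even, N = 2n, h = 1/n, c ∈ ℝ, and consider the one-dimensional (d = 1) fine-grid matrices A_h^D = T_h^D + c I_{n−1} and A_h^P = T_h^P + c I_N, coarse-grid matrices A_{2h}^D = T_{2h}^D + c I_{n/2−1} ∈ ℝ^{(n/2−1)×(n/2−1)} and A_{2h}^P = T_{2h}^P + c I_n ∈ ℝ^{n×n} (with step 2h), smoothers S_h^D, S_h^P, restriction matrices I_{h,2h}^D, I_{h,2h}^P and prolongation matrices I_{2h,h}^D, I_{2h,h}^P. Assume the pairs (A_h^D, A_h^P) and (S_h^D, S_h^P) are LFA-compatible with respect to (E_{o,h}, R_{o,h}); assume A_{2h}^D, A_{2h}^P are invertible and ((A_{2h}^D)^{−1}, (A_{2h}^P)^{−1}) is LFA-compatible with respect to (E_{o,2h}, R_{o,2h}); assume I_{h,2h}^D = R_{o,2h} I_{h,2h}^P E_{o,h} with I_{h,2h}^P v ∈ range(E_{o,2h}) for all v ∈ range(E_{o,h}), and I_{2h,h}^D = R_{o,h} I_{2h,h}^P E_{o,2h} with I_{2h,h}^P v ∈ range(E_{o,h}) for all v ∈ range(E_{o,2h}); assume A_h^D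 and A_h^P are invertible. Define the two-grid iterators B_{TG}^{D,P} = (I − (I − I_{2h,h}^{D,P} (A_{2h}^{D,P})^{−1} I_{h,2h}^{D,P} A_h^{D,P})(I − S_h^{D,P} A_h^{D,P})) (A_h^{D,P})^{−1}. Then the pair (B_{TG}^D, B_{TG}^P) is LFA-compatible with respect to (E_{o,h}, R_{o,h}): B_{TG}^D = R_{o,h} B_{TG}^P E_{o,h} and B_{TG}^P v ∈ range(E_{o,h}) for all v ∈ range(E_{o,h}). -/

import Mathlib

open Matrix Finset

noncomputable section

/-- The tridiagonal matrix `tridiag(-1, 2, -1)` of size `m × m` (0-based indexing). -/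
def tridiag (m : ℕ) : Matrix (Fin m) (Fin m) ℝ :=
  Matrix.of fun i j =>
    if (i : ℕ) = (j : ℕ) then 2
    else if (i : ℕ) + 1 = (j : ℕ) ∨ (j : ℕ) + 1 = (i : ℕ) then -1 else 0

/-- The odd extension operator `E_{o,h} : ℝ^{n-1} → ℝ^{2n}`, sending the basis vector
`e_i^{n-1}` (math index `i = 1,…,n-1`) to `e_i^{2n} - e_{2n-i}^{2n}`.
In 0-based indexing, column `i` has entry `1` in row `i` and `-1` in row `2n - i - 2`. -/
def oddExt (n : ℕ) : Matrix (Fin (2 * n)) (Fin (n - 1)) ℝ :=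
  Matrix.of fun k i =>
    if (k : ℕ) = (i : ℕ) then 1
    else if (k : ℕ) + (i : ℕ) + 2 = 2 * n then -1 else 0

/-- The restriction operator `R_{o,h} = (1/2) E_{o,h}ᵀ`. -/
def oddRestr (n : ℕ) : Matrix (Fin (n - 1)) (Fin (2 * n)) ℝ :=
  (2 : ℝ)⁻¹ • (oddExt n)ᵀ

/-- The Dirichlet matrix `T_h^D = (1/h²) · tridiag(-1, 2, -1)`, with `h = 1/n`
(so `1/h² = n²`). -/
def ThD (n : ℕ) : Matrix (Fin (n - 1)) (Fin (n - 1)) ℝ :=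
  ((n : ℝ) ^ 2) • tridiag (n - 1)

/-- The periodic matrix `T_h^P = (1/h²) · (tridiag(-1,2,-1) - e₁ e_Nᵀ - e_N e₁ᵀ)`,
with `h = 1/n`, `N = 2n` (0-based: corners at `(0, 2n-1)` and `(2n-1, 0)`). -/
def ThP (n : ℕ) : Matrix (Fin (2 * n)) (Fin (2 * n)) ℝ :=
  ((n : ℝ) ^ 2) •
    (tridiag (2 * n)
      - Matrix.of (fun (i j : Fin (2 * n)) => if (i : ℕ) = 0 ∧ (j : ℕ) = 2 * n - 1 then 1 else 0)
      - Matrix.of (fun (i j : Fin (2 * n)) => if (i : ℕ) = 2 * n - 1 ∧ (j : ℕ) = 0 then 1 else 0))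

/-- The `d`-fold Kronecker power `X^{⊗d}`, where `ℝ^{a^d}` is identified with the
space of functions `(Fin d → Fin a) → ℝ`. -/
def kronPow {a b : ℕ} (d : ℕ) (X : Matrix (Fin a) (Fin b) ℝ) :
    Matrix (Fin d → Fin a) (Fin d → Fin b) ℝ :=
  Matrix.of fun i j => ∏ t, X (i t) (j t)

/-- `Σ_{t=1}^d I^{⊗(t-1)} ⊗ T ⊗ I^{⊗(d-t)}` in the function-indexed representation. -/
def kronSumId {m : ℕ} (d : ℕ) (T : Matrix (Fin m) (Fin m) ℝ) :
    Matrix (Fin d → Fin m) (Fin d → Fin m) ℝ :=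
  ∑ t : Fin d, Matrix.of fun i j =>
    T (i t) (j t) * ∏ s ∈ Finset.univ.erase t, (if i s = j s then (1 : ℝ) else 0)

/-- The `d`-dimensional discrete Dirichlet reaction-diffusion matrix
`A_h^D = Σ_j I^{⊗(j-1)} ⊗ T_h^D ⊗ I^{⊗(d-j)} + c I^{⊗d}`. -/
def AD (n d : ℕ) (c : ℝ) : Matrix (Fin d → Fin (n - 1)) (Fin d → Fin (n - 1)) ℝ :=
  kronSumId d (ThD n) + c • 1

/-- The `d`-dimensional discrete periodic reaction-diffusion matrix
`A_h^P = Σ_j I^{⊗(j-1)} ⊗ T_h^P ⊗ I^{⊗(d-j)} + c I^{⊗d}`. -/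
def AP (n d : ℕ) (c : ℝ) : Matrix (Fin d → Fin (2 * n)) (Fin d → Fin (2 * n)) ℝ :=
  kronSumId d (ThP n) + c • 1

/-- A pair `(M^D, M^P)` is LFA-compatible with respect to an extension `E` and a
restriction `R` if `M^D = R M^P E` and `M^P` maps `range E` into itself. -/
def LFACompatible {α β : Type*} [Fintype α] [Fintype β]
    (E : Matrix α β ℝ) (R : Matrix β α ℝ)
    (MD : Matrix β β ℝ) (MP : Matrix α α ℝ) : Prop :=
  MD = R * MP * E ∧ ∀ v ∈ Set.range E.mulVec, MP *ᵥ v ∈ Set.range E.mulVec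

/-! Since `R_{o,h} E_{o,h} = 1` (the columns `e_i - e_{2n-i}` of `E_{o,h}` are orthogonal with
squared norm `2`), a pair `(M^D, M^P)` is LFA-compatible exactly when `M^P E = E M^D`. Such
intertwining relations are preserved under products, differences and inverses, and the two-grid
iterator is assembled from its LFA-compatible components by exactly these operations. -/

lemma oddExt_transpose_mul_self (n : ℕ) : (oddExt n)ᵀ * oddExt n = (2 : ℝ) • 1 := by
  ext i j
  have hi := i.isLt
  have hj := j.isLt
  rw [Matrix.mul_apply, Fintype.sum_eq_add ⟨i, by omega⟩ ⟨2 * n - 2 - i, by omega⟩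
    (by simp only [ne_eq, Fin.ext_iff]; omega)]
  · simp only [Matrix.transpose_apply, oddExt, Matrix.of_apply, Matrix.smul_apply,
      Matrix.one_apply, Fin.ext_iff, smul_eq_mul]
    split_ifs <;> (try omega) <;> norm_num
  · rintro k ⟨hk₁, hk₂⟩
    simp only [ne_eq, Fin.ext_iff] at hk₁ hk₂
    simp only [Matrix.transpose_apply, oddExt, Matrix.of_apply]
    split_ifs <;> (try omega) <;> simp

lemma oddRestr_mul_oddExt (n : ℕ) : oddRestr n * oddExt n = 1 := by
  rw [oddRestr, Matrix.smul_mul, oddExt_transpose_mul_self, smul_smul]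
  norm_num

def Intertwines {K α β γ δ : Type*} [Semiring K] [Fintype α] [Fintype δ]
    (E : Matrix α β K) (E' : Matrix γ δ K) (MP : Matrix γ α K) (MD : Matrix δ β K) : Prop :=
  MP * E = E' * MD

namespace Intertwines

variable {K α β γ δ ε ζ : Type*}

theorem mul [Semiring K] [Fintype α] [Fintype γ] [Fintype δ] [Fintype ζ]
    {E₁ : Matrix α β K} {E₂ : Matrix γ δ K} {E₃ : Matrix ε ζ K}
    {MP : Matrix γ α K} {MD : Matrix δ β K} {NP : Matrix ε γ K} {ND : Matrix ζ δ K}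
    (hN : Intertwines E₂ E₃ NP ND) (hM : Intertwines E₁ E₂ MP MD) :
    Intertwines E₁ E₃ (NP * MP) (ND * MD) := by
  unfold Intertwines at *
  rw [Matrix.mul_assoc, hM, ← Matrix.mul_assoc, hN, Matrix.mul_assoc]

theorem sub [Ring K] [Fintype α] [Fintype δ] {E : Matrix α β K} {E' : Matrix γ δ K}
    {MP NP : Matrix γ α K} {MD ND : Matrix δ β K}
    (hM : Intertwines E E' MP MD) (hN : Intertwines E E' NP ND) :
    Intertwines E E' (MP - NP) (MD - ND) := by
  unfold Intertwines at *
  rw [Matrix.sub_mul, Matrix.mul_sub, hM, hN]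

theorem one [Semiring K] [Fintype α] [Fintype β] [DecidableEq α] [DecidableEq β]
    (E : Matrix α β K) : Intertwines E E 1 1 := by
  rw [Intertwines, Matrix.one_mul, Matrix.mul_one]

theorem inv [CommRing K] [Fintype α] [Fintype β] [DecidableEq α] [DecidableEq β]
    {E : Matrix α β K} {MP : Matrix α α K} {MD : Matrix β β K} (h : Intertwines E E MP MD)
    (hP : IsUnit MP) (hD : IsUnit MD) : Intertwines E E MP⁻¹ MD⁻¹ :=
  calc MP⁻¹ * E = MP⁻¹ * E * (MD * MD⁻¹) := by
        rw [Matrix.mul_nonsing_inv _ ((Matrix.isUnit_iff_isUnit_det _).1 hD), Matrix.mul_one]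
    _ = MP⁻¹ * (MP * E) * MD⁻¹ := by rw [h]; simp only [Matrix.mul_assoc]
    _ = E * MD⁻¹ := by
        rw [← Matrix.mul_assoc, Matrix.nonsing_inv_mul _ ((Matrix.isUnit_iff_isUnit_det _).1 hP),
          Matrix.one_mul]

end Intertwines

theorem intertwines_iff_of_mul_eq_one {K α β γ δ : Type*} [Semiring K]
    [Fintype α] [Fintype β] [Fintype γ] [Fintype δ] [DecidableEq δ]
    {E : Matrix α β K} {E' : Matrix γ δ K} {R' : Matrix δ γ K} (hRE : R' * E' = 1)
    {MP : Matrix γ α K} {MD : Matrix δ β K} :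
    Intertwines E E' MP MD ↔
      MD = R' * MP * E ∧ ∀ v ∈ Set.range E.mulVec, MP *ᵥ v ∈ Set.range E'.mulVec := by
  refine ⟨fun h => ?_, ?_⟩
  · refine ⟨?_, ?_⟩
    · rw [Matrix.mul_assoc, h, ← Matrix.mul_assoc, hRE, Matrix.one_mul]
    · rintro - ⟨x, rfl⟩
      exact ⟨MD *ᵥ x, by rw [Matrix.mulVec_mulVec, ← h, ← Matrix.mulVec_mulVec]⟩
  · rintro ⟨rfl, hrange⟩
    rw [Intertwines, Matrix.ext_iff_mulVec]
    intro x
    -- `MP E x = E' w`, and `R' E' = 1` recovers `w` as `R' MP E x`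
    obtain ⟨w, hw⟩ := hrange _ ⟨x, rfl⟩
    simp only [← Matrix.mulVec_mulVec, ← hw]
    rw [Matrix.mulVec_mulVec _ R', hRE, Matrix.one_mulVec]

theorem Intertwines.twoGrid {K α β γ δ : Type*} [CommRing K] [Fintype α] [Fintype β]
    [Fintype γ] [Fintype δ] [DecidableEq α] [DecidableEq β]
    {E : Matrix α β K} {Ec : Matrix γ δ K} {AP SP : Matrix α α K} {AD SD : Matrix β β K}
    {CP : Matrix γ γ K} {CD : Matrix δ δ K} {RP : Matrix γ α K} {RD : Matrix δ β K}
    {PP : Matrix α γ K} {PD : Matrix β δ K}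
    (hA : Intertwines E E AP AD) (hS : Intertwines E E SP SD) (hC : Intertwines Ec Ec CP CD)
    (hR : Intertwines E Ec RP RD) (hP : Intertwines Ec E PP PD)
    (hAP : IsUnit AP) (hAD : IsUnit AD) :
    Intertwines E E ((1 - (1 - PP * CP * RP * AP) * (1 - SP * AP)) * AP⁻¹)
      ((1 - (1 - PD * CD * RD * AD) * (1 - SD * AD)) * AD⁻¹) :=
  have coarseCorrection := (one E).sub (((hP.mul hC).mul hR).mul hA)
  have smoothing := (one E).sub (hS.mul hA)
  ((one E).sub (coarseCorrection.mul smoothing)).mul (hA.inv hAP hAD)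

theorem twoGrid_LFACompatible_general (m : ℕ) (c : ℝ)
    (SD : Matrix (Fin (2 * m - 1)) (Fin (2 * m - 1)) ℝ)
    (SP : Matrix (Fin (2 * (2 * m))) (Fin (2 * (2 * m))) ℝ)
    (Ih2hD : Matrix (Fin (m - 1)) (Fin (2 * m - 1)) ℝ)
    (Ih2hP : Matrix (Fin (2 * m)) (Fin (2 * (2 * m))) ℝ)
    (I2hhD : Matrix (Fin (2 * m - 1)) (Fin (m - 1)) ℝ)
    (I2hhP : Matrix (Fin (2 * (2 * m))) (Fin (2 * m)) ℝ)
    (hA : LFACompatible (oddExt (2 * m)) (oddRestr (2 * m))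
      (ThD (2 * m) + c • 1) (ThP (2 * m) + c • 1))
    (hS : LFACompatible (oddExt (2 * m)) (oddRestr (2 * m)) SD SP)
    (hA2inv : LFACompatible (oddExt m) (oddRestr m)
      (ThD m + c • 1)⁻¹ (ThP m + c • 1)⁻¹)
    (hIh2h : Ih2hD = oddRestr m * Ih2hP * oddExt (2 * m) ∧
      ∀ v ∈ Set.range (oddExt (2 * m)).mulVec,
        Ih2hP *ᵥ v ∈ Set.range (oddExt m).mulVec)
    (hI2hh : I2hhD = oddRestr (2 * m) * I2hhP * oddExt m ∧
      ∀ v ∈ Set.range (oddExt m).mulVec,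
        I2hhP *ᵥ v ∈ Set.range (oddExt (2 * m)).mulVec)
    (hAD : IsUnit (ThD (2 * m) + c • (1 : Matrix (Fin (2 * m - 1)) (Fin (2 * m - 1)) ℝ)))
    (hAP : IsUnit (ThP (2 * m) + c • (1 : Matrix (Fin (2 * (2 * m))) (Fin (2 * (2 * m))) ℝ))) :
    LFACompatible (oddExt (2 * m)) (oddRestr (2 * m))
      ((1 - (1 - I2hhD * (ThD m + c • 1)⁻¹ * Ih2hD * (ThD (2 * m) + c • 1)) *
          (1 - SD * (ThD (2 * m) + c • 1))) * (ThD (2 * m) + c • 1)⁻¹)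
      ((1 - (1 - I2hhP * (ThP m + c • 1)⁻¹ * Ih2hP * (ThP (2 * m) + c • 1)) *
          (1 - SP * (ThP (2 * m) + c • 1))) * (ThP (2 * m) + c • 1)⁻¹) := by
  simp only [LFACompatible, ← intertwines_iff_of_mul_eq_one (oddRestr_mul_oddExt _)]
    at hA hS hA2inv hIh2h hI2hh ⊢
  exact .twoGrid hA hS hA2inv hIh2h hI2hh hAP hAD

/-- under LFA-compatibility of all two-grid components (one spatial
dimension, `n = 2m` even, fine step `h = 1/n`, coarse step `2h = 1/m`), the two-grid
iterators `B_{TG}^{D,P} = (I - (I - I_{2h,h} A_{2h}⁻¹ I_{h,2h} A_h)(I - S_h A_h)) A_h⁻¹`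
form an LFA-compatible pair with respect to `(E_{o,h}, R_{o,h})`. -/
theorem twoGrid_LFACompatible (m : ℕ) (hm : 1 ≤ m) (c : ℝ)
    (SD : Matrix (Fin (2 * m - 1)) (Fin (2 * m - 1)) ℝ)
    (SP : Matrix (Fin (2 * (2 * m))) (Fin (2 * (2 * m))) ℝ)
    (Ih2hD : Matrix (Fin (m - 1)) (Fin (2 * m - 1)) ℝ)
    (Ih2hP : Matrix (Fin (2 * m)) (Fin (2 * (2 * m))) ℝ)
    (I2hhD : Matrix (Fin (2 * m - 1)) (Fin (m - 1)) ℝ)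
    (I2hhP : Matrix (Fin (2 * (2 * m))) (Fin (2 * m)) ℝ)
    (hA : LFACompatible (oddExt (2 * m)) (oddRestr (2 * m))
      (ThD (2 * m) + c • 1) (ThP (2 * m) + c • 1))
    (hS : LFACompatible (oddExt (2 * m)) (oddRestr (2 * m)) SD SP)
    (hA2D : IsUnit (ThD m + c • (1 : Matrix (Fin (m - 1)) (Fin (m - 1)) ℝ)))
    (hA2P : IsUnit (ThP m + c • (1 : Matrix (Fin (2 * m)) (Fin (2 * m)) ℝ)))
    (hA2inv : LFACompatible (oddExt m) (oddRestr m)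
      (ThD m + c • 1)⁻¹ (ThP m + c • 1)⁻¹)
    (hIh2h : Ih2hD = oddRestr m * Ih2hP * oddExt (2 * m) ∧
      ∀ v ∈ Set.range (oddExt (2 * m)).mulVec,
        Ih2hP *ᵥ v ∈ Set.range (oddExt m).mulVec)
    (hI2hh : I2hhD = oddRestr (2 * m) * I2hhP * oddExt m ∧
      ∀ v ∈ Set.range (oddExt m).mulVec,
        I2hhP *ᵥ v ∈ Set.range (oddExt (2 * m)).mulVec)
    (hAD : IsUnit (ThD (2 * m) + c • (1 : Matrix (Fin (2 * m - 1)) (Fin (2 * m - 1)) ℝ)))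
    (hAP : IsUnit (ThP (2 * m) + c • (1 : Matrix (Fin (2 * (2 * m))) (Fin (2 * (2 * m))) ℝ))) :
    LFACompatible (oddExt (2 * m)) (oddRestr (2 * m))
      ((1 - (1 - I2hhD * (ThD m + c • 1)⁻¹ * Ih2hD * (ThD (2 * m) + c • 1)) *
          (1 - SD * (ThD (2 * m) + c • 1))) * (ThD (2 * m) + c • 1)⁻¹)
      ((1 - (1 - I2hhP * (ThP m + c • 1)⁻¹ * Ih2hP * (ThP (2 * m) + c • 1)) *
          (1 - SP * (ThP (2 * m) + c • 1))) * (ThP (2 * m) + c • 1)⁻¹) :=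
  twoGrid_LFACompatible_general m c SD SP Ih2hD Ih2hP I2hhD I2hhP hA hS hA2inv hIh2h hI2hh hAD hAP
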